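/- Let T : H₁ → H₂ be a densely defined closed operator between separable Hilbert spaces with closed range. If the inclusion D(T*∘T) ∩ im(T*∘T) ↪ H₁, with D(T*∘T) ∩ im(T*∘T) endowed with the graph norm of T*∘T, is a compact operator, then the inclusion D(T∘T*) ∩ im(T∘T*) ↪ H₂, with the graph norm of T∘T*, is also a compact operator. -/

import Mathlib

/-!
Write `S₁ = T†T` and `S₂ = TT†`. Compactness gives a Poincaré inequality `‖a‖ ≤ C ‖S₁ a‖` on
`dom S₁ ∩ ran S₁`: unit vectors `aₙ` there with `S₁ aₙ → 0` would have a limit point in `ker T`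
(`T` is closed and `‖T a‖² ≤ ‖S₁ a‖ ‖a‖`), which is orthogonal to `ran S₁ ∋ aₙ`.
Since `ran T` is closed, `ran T† ⊆ ran S₁`, so every `u = S₂ b` in the graph-norm unit ball of
`dom S₂ ∩ ran S₂` is `T v` with `v = T† b ∈ dom S₁ ∩ ran S₁`, `‖S₁ v‖ = ‖T† u‖ ≤ 1`, hence
`‖v‖ ≤ C`. Finally `‖T w‖² ≤ ‖S₁ w‖ ‖w‖` makes `T` uniformly continuous on graph-bounded subsets
of `dom S₁`, so it maps the relatively compact set of these `v` onto a totally bounded set.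
-/

namespace Paper

/-- Composition `S ∘ T` of partially defined (unbounded) linear maps, with domain
`{x ∈ dom T | T x ∈ dom S}` and value `S (T x)`. -/
noncomputable def pcomp {R E F G : Type*} [Ring R] [AddCommGroup E] [Module R E]
    [AddCommGroup F] [Module R F] [AddCommGroup G] [Module R G]
    (S : F →ₗ.[R] G) (T : E →ₗ.[R] F) : E →ₗ.[R] G where
  domain := (S.domain.comap T.toFun).map T.domain.subtype
  toFun :=
    (S.toFun.comp (((T.toFun.comp (S.domain.comap T.toFun).subtype)).codRestrict S.domain
      fun c => c.2)).comp
      (Submodule.equivMapOfInjective T.domain.subtype (Submodule.injective_subtype T.domain)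
        (S.domain.comap T.toFun)).symm.toLinearMap
/-- The range (image) of a partially defined linear map. -/
def pran {R E F : Type*} [Ring R] [AddCommGroup E] [Module R E] [AddCommGroup F] [Module R F]
    (T : E →ₗ.[R] F) : Set F :=
  Set.range fun x : T.domain => T x

/-- The kernel of a partially defined linear map, as a subset of the ambient space. -/
def pker {R E F : Type*} [Ring R] [AddCommGroup E] [Module R E] [AddCommGroup F] [Module R F]
    (T : E →ₗ.[R] F) : Set E :=
  {x | ∃ h : x ∈ T.domain, T ⟨x, h⟩ = 0}

/-- The inclusion `dom S ∩ im S ↪ E`, with `dom S ∩ im S` endowed with the graph norm of `S`,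
is a compact operator: the closure of the image of the corresponding graph-norm unit ball is
compact. -/
def CompactGraphInclusionOn {E : Type*} [NormedAddCommGroup E] [InnerProductSpace ℂ E]
    (S : E →ₗ.[ℂ] E) : Prop :=
  IsCompact (closure ((fun u : S.domain => (u : E)) ''
    {u : S.domain | (u : E) ∈ pran S ∧ ‖(u : E)‖ ^ 2 + ‖S u‖ ^ 2 ≤ 1}))

open LinearPMap Filter Topology

section pcomp

variable {R E F G : Type*} [Ring R] [AddCommGroup E] [Module R E]
    [AddCommGroup F] [Module R F] [AddCommGroup G] [Module R G]
    {S : F →ₗ.[R] G} {T : E →ₗ.[R] F}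

theorem mem_pcomp_domain {x : E} :
    x ∈ (pcomp S T).domain ↔ ∃ hx : x ∈ T.domain, T ⟨x, hx⟩ ∈ S.domain := by
  constructor
  · rintro ⟨⟨y, hy⟩, hmem, rfl⟩
    exact ⟨hy, hmem⟩
  · rintro ⟨hx, hSx⟩
    exact ⟨⟨x, hx⟩, hSx, rfl⟩

theorem pcomp_domain_le : (pcomp S T).domain ≤ T.domain := fun _ hx =>
  (mem_pcomp_domain.mp hx).1

theorem pcomp_apply (x : (pcomp S T).domain) (h1 : (x : E) ∈ T.domain)
    (h2 : T ⟨x, h1⟩ ∈ S.domain) : pcomp S T x = S ⟨T ⟨x, h1⟩, h2⟩ := by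
  have he : (Submodule.equivMapOfInjective T.domain.subtype
      (Submodule.injective_subtype T.domain) (S.domain.comap T.toFun)).symm ⟨x, x.2⟩
      = ⟨⟨x, h1⟩, h2⟩ := by
    rw [LinearEquiv.symm_apply_eq]
    rfl
  show S.toFun ⟨T.toFun ((Submodule.equivMapOfInjective T.domain.subtype
      (Submodule.injective_subtype T.domain) (S.domain.comap T.toFun)).symm ⟨x, x.2⟩), _⟩ = _
  simp only [he]
  rfl

theorem smul_mem_pran (c : R) {y : F} (hy : y ∈ pran T) : c • y ∈ pran T := by
  obtain ⟨x, rfl⟩ := hy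
  exact ⟨c • x, T.map_smul c x⟩

end pcomp

theorem uniformContinuousOn_of_dist_sq_le {α β : Type*} [PseudoMetricSpace α]
    [PseudoMetricSpace β] {f : α → β} {s : Set α} {K : ℝ}
    (h : ∀ x ∈ s, ∀ y ∈ s, dist (f x) (f y) ^ 2 ≤ K * dist x y) : UniformContinuousOn f s := by
  rw [Metric.uniformContinuousOn_iff]
  intro ε hε
  refine ⟨ε ^ 2 / (|K| + 1), by positivity, fun x hx y hy hxy => ?_⟩
  refine lt_of_pow_lt_pow_left₀ 2 hε.le ?_
  calc dist (f x) (f y) ^ 2 ≤ K * dist x y := h x hx y hy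
    _ ≤ (|K| + 1) * dist x y := by gcongr; linarith [le_abs_self K]
    _ < (|K| + 1) * (ε ^ 2 / (|K| + 1)) := by gcongr
    _ = ε ^ 2 := by field_simp

theorem _root_.TotallyBounded.image_of_uniformContinuousOn {α β : Type*} [UniformSpace α]
    [UniformSpace β] {f : α → β} {s : Set α} (hs : TotallyBounded s)
    (hf : UniformContinuousOn f s) : TotallyBounded (f '' s) := by
  have huniv : TotallyBounded (Set.univ : Set s) := Subtype.coe_preimage_self s ▸
    totallyBounded_preimage isUniformEmbedding_subtype_val.isUniformInducing hs
  simpa [Set.image_univ, Set.range_domRestrict] using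
    huniv.image (uniformContinuousOn_iff_restrict.mp hf)

section FormalAdjoint

variable {𝕜 E F : Type*} [RCLike 𝕜] [NormedAddCommGroup E] [InnerProductSpace 𝕜 E]
    [NormedAddCommGroup F] [InnerProductSpace 𝕜 F] {A : E →ₗ.[𝕜] F} {B : F →ₗ.[𝕜] E}

theorem _root_.LinearPMap.IsFormalAdjoint.norm_sq_le (h : B.IsFormalAdjoint A)
    (x : (pcomp B A).domain) (hx : (x : E) ∈ A.domain) :
    ‖A ⟨x, hx⟩‖ ^ 2 ≤ ‖pcomp B A x‖ * ‖(x : E)‖ := by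
  have hAx := ((mem_pcomp_domain (S := B)).mp x.2).2
  calc ‖A ⟨x, hx⟩‖ ^ 2 = RCLike.re (inner 𝕜 (A ⟨x, hx⟩) (A ⟨x, hx⟩)) :=
        (inner_self_eq_norm_sq _).symm
    _ = RCLike.re (inner 𝕜 (pcomp B A x) (x : E)) := by
        rw [pcomp_apply x hx hAx, h ⟨_, hAx⟩ ⟨x, hx⟩]
    _ ≤ ‖pcomp B A x‖ * ‖(x : E)‖ := (RCLike.re_le_norm _).trans (norm_inner_le_norm _ _)

theorem _root_.LinearPMap.IsFormalAdjoint.inner_eq_zero_of_mem_pran_of_mem_pker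
    (h : B.IsFormalAdjoint A) {w x : E} (hw : w ∈ pran (pcomp B A)) (hx : x ∈ pker A) :
    inner 𝕜 w x = 0 := by
  obtain ⟨b, rfl⟩ := hw
  obtain ⟨hxA, hAx⟩ := hx
  obtain ⟨hbA, hAb⟩ := (mem_pcomp_domain (S := B)).mp b.2
  show inner 𝕜 (pcomp B A b) x = 0
  rw [pcomp_apply b hbA hAb, h ⟨_, hAb⟩ ⟨x, hxA⟩, hAx, inner_zero_right]

theorem _root_.LinearPMap.IsFormalAdjoint.mem_pker_of_tendsto (h : B.IsFormalAdjoint A)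
    (hA : A.IsClosed) {ι : Type*} {l : Filter ι} [l.NeBot] {x : ι → (pcomp B A).domain} {w : E}
    (hx : Tendsto (fun i => (x i : E)) l (𝓝 w)) (hBA : Tendsto (fun i => pcomp B A (x i)) l (𝓝 0)) :
    w ∈ pker A := by
  have hAx : Tendsto (fun i => A ⟨x i, pcomp_domain_le (x i).2⟩) l (𝓝 0) :=
    squeeze_zero_norm (fun i => Real.le_sqrt_of_sq_le (h.norm_sq_le _ _))
      (by simpa using (hBA.norm.mul hx.norm).sqrt)
  have hgraph : (w, 0) ∈ A.graph :=
    hA.mem_of_tendsto (hx.prodMk_nhds hAx) (Eventually.of_forall fun i => A.mem_graph ⟨x i, _⟩)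
  obtain ⟨y, rfl, hy⟩ := A.mem_graph_iff.mp hgraph
  exact ⟨y.2, hy⟩

theorem _root_.LinearPMap.IsFormalAdjoint.uniformContinuousOn (h : B.IsFormalAdjoint A) (R : ℝ) :
    UniformContinuousOn (fun x : (pcomp B A).domain => A ⟨x, pcomp_domain_le x.2⟩)
      {x | ‖pcomp B A x‖ ≤ R} := by
  refine uniformContinuousOn_of_dist_sq_le (K := 2 * R) fun x hx y hy => ?_
  have hsub : A ⟨x, pcomp_domain_le x.2⟩ - A ⟨y, pcomp_domain_le y.2⟩
      = A ⟨(x - y : (pcomp B A).domain), pcomp_domain_le (x - y).2⟩ := (A.map_sub _ _).symm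
  have hBA : ‖pcomp B A (x - y)‖ ≤ 2 * R := by
    rw [LinearPMap.map_sub]
    linarith [norm_sub_le (pcomp B A x) (pcomp B A y), hx.out, hy.out]
  rw [dist_eq_norm, dist_eq_norm, hsub]
  exact (h.norm_sq_le _ _).trans (mul_le_mul_of_nonneg_right hBA (norm_nonneg _))

end FormalAdjoint

section Adjoint

variable {𝕜 E F : Type*} [RCLike 𝕜] [NormedAddCommGroup E] [InnerProductSpace 𝕜 E]
    [CompleteSpace E] [NormedAddCommGroup F] [InnerProductSpace 𝕜 F] [CompleteSpace F]
    {T : E →ₗ.[𝕜] F}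

theorem pran_adjoint_subset_pran_pcomp (hdense : Dense (T.domain : Set E))
    (hran : IsClosed (pran T)) : pran T† ⊆ pran (pcomp T† T) := by
  rintro _ ⟨y, rfl⟩
  let M : Submodule 𝕜 F := LinearMap.range T.toFun
  have : CompleteSpace M := hran.completeSpace_coe
  obtain ⟨x, hx⟩ := LinearMap.mem_range.mp (M.starProjection_apply_mem y)
  -- `T x` is the projection of `y` onto the closed range, so `y - T x` is orthogonal to that range
  have hinner : ∀ x' : T.domain, inner 𝕜 (T† y) (x' : E) = inner 𝕜 (T x) (T x') := by
    intro x'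
    rw [adjoint_isFormalAdjoint hdense y x', ← sub_eq_zero, ← inner_sub_left]
    show inner 𝕜 ((y : F) - T.toFun x) (T.toFun x') = 0
    rw [hx]
    exact M.starProjection_inner_eq_zero _ _ ⟨x', rfl⟩
  have hTx : T x ∈ T†.domain := mem_adjoint_domain_of_exists _ ⟨T† y, hinner⟩
  have hxS : (x : E) ∈ (pcomp T† T).domain := mem_pcomp_domain.mpr ⟨x.2, hTx⟩
  refine ⟨⟨x, hxS⟩, ?_⟩
  show pcomp T† T ⟨x, hxS⟩ = T† y
  rw [pcomp_apply _ x.2 hTx]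
  exact adjoint_apply_eq hdense _ hinner

end Adjoint

section CompactGraphInclusion

variable {E : Type*} [NormedAddCommGroup E] [InnerProductSpace ℂ E]

def rangeGraphBox (S : E →ₗ.[ℂ] E) (R : ℝ) : Set S.domain :=
  {u | (u : E) ∈ pran S ∧ ‖(u : E)‖ ≤ R ∧ ‖S u‖ ≤ R}

theorem CompactGraphInclusionOn.isCompact_closure_rangeGraphBox {S : E →ₗ.[ℂ] E}
    (h : CompactGraphInclusionOn S) (R : ℝ) :
    IsCompact (closure (((↑) : S.domain → E) '' rangeGraphBox S R)) := by
  set ρ : ℝ := 2 * (|R| + 1) with hρ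
  have hρpos : 0 < ρ := by positivity
  have hK := h.image (continuous_const_smul (ρ : ℂ))
  refine hK.of_isClosed_subset isClosed_closure (closure_minimal ?_ hK.isClosed)
  rintro _ ⟨u, ⟨hran, hu, hSu⟩, rfl⟩
  have hscale : ∀ t : ℝ, 0 ≤ t → t ≤ R → (ρ⁻¹ * t) ^ 2 ≤ 1 / 4 := fun t ht₀ ht => by
    have : ρ⁻¹ * t ≤ 1 / 2 := by
      rw [inv_mul_le_iff₀ hρpos]
      linarith [le_abs_self R]
    nlinarith [mul_nonneg (inv_nonneg.2 hρpos.le) ht₀]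
  refine ⟨((ρ⁻¹ : ℝ) : ℂ) • (u : E),
    subset_closure ⟨((ρ⁻¹ : ℝ) : ℂ) • u, ⟨smul_mem_pran _ hran, ?_⟩, rfl⟩, ?_⟩
  · simp only [Submodule.coe_smul, LinearPMap.map_smul, norm_smul, norm_inv, Complex.norm_real,
      Real.norm_eq_abs, abs_of_pos hρpos]
    linarith [hscale _ (norm_nonneg _) hu, hscale _ (norm_nonneg _) hSu]
  · simp [smul_smul, hρpos.ne']

end CompactGraphInclusion

section Hilbert

variable {H₁ H₂ : Type*} [NormedAddCommGroup H₁] [InnerProductSpace ℂ H₁] [CompleteSpace H₁]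
    [NormedAddCommGroup H₂] [InnerProductSpace ℂ H₂] {T : H₁ →ₗ.[ℂ] H₂}

theorem exists_pos_le_norm_pcomp_adjoint_self (hdense : Dense (T.domain : Set H₁))
    (hclosed : T.IsClosed) (hcpt : CompactGraphInclusionOn (pcomp T† T)) :
    ∃ ε > 0, ∀ a : (pcomp T† T).domain, (a : H₁) ∈ pran (pcomp T† T) → ‖(a : H₁)‖ = 1 →
      ε ≤ ‖pcomp T† T a‖ := by
  by_contra! hcon
  choose w hran hnorm hS using fun n : ℕ => hcon (1 / (n + 1)) (by positivity)
  have hbox : ∀ n, w n ∈ rangeGraphBox (pcomp T† T) 1 := fun n =>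
    ⟨hran n, (hnorm n).le, (hS n).le.trans (div_le_one_of_le₀ (by simp) (by positivity))⟩
  obtain ⟨x, -, φ, hφ, hlim⟩ := (hcpt.isCompact_closure_rangeGraphBox 1).tendsto_subseq
    fun n => subset_closure (Set.mem_image_of_mem _ (hbox n))
  have hSlim : Tendsto (fun n => pcomp T† T (w (φ n))) atTop (𝓝 0) :=
    squeeze_zero_norm (fun n => (hS (φ n)).le)
      (tendsto_one_div_add_atTop_nhds_zero_nat.comp hφ.tendsto_atTop)
  have hker : x ∈ pker T :=
    (adjoint_isFormalAdjoint hdense).mem_pker_of_tendsto hclosed (x := fun n => w (φ n)) hlim hSlim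
  have hself : inner ℂ x x = 0 := by
    refine tendsto_nhds_unique (hlim.inner tendsto_const_nhds) ?_
    simp only [Function.comp_def, tendsto_const_nhds,
      (adjoint_isFormalAdjoint hdense).inner_eq_zero_of_mem_pran_of_mem_pker (hran _) hker]
  have hx : ‖x‖ = 1 :=
    tendsto_nhds_unique hlim.norm (by simp only [Function.comp_def, hnorm, tendsto_const_nhds])
  simp [inner_self_eq_zero.mp hself] at hx

theorem exists_norm_le_mul_norm_pcomp_adjoint_self (hdense : Dense (T.domain : Set H₁))
    (hclosed : T.IsClosed) (hcpt : CompactGraphInclusionOn (pcomp T† T)) :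
    ∃ C, ∀ a : (pcomp T† T).domain, (a : H₁) ∈ pran (pcomp T† T) →
      ‖(a : H₁)‖ ≤ C * ‖pcomp T† T a‖ := by
  obtain ⟨ε, hε, hbound⟩ := exists_pos_le_norm_pcomp_adjoint_self hdense hclosed hcpt
  refine ⟨ε⁻¹, fun a ha => ?_⟩
  rcases eq_or_ne (a : H₁) 0 with h0 | h0
  · rw [h0, norm_zero]
    positivity
  have hpos : 0 < ‖(a : H₁)‖ := norm_pos_iff.2 h0
  have hunit := hbound ((‖(a : H₁)‖⁻¹ : ℂ) • a) (smul_mem_pran _ ha)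
    (by simp [norm_smul, hpos.ne'])
  simp only [LinearPMap.map_smul, norm_smul, norm_inv, Complex.norm_real, norm_norm] at hunit
  rw [le_inv_mul_iff₀ hε, mul_comm, ← le_inv_mul_iff₀ hpos]
  exact hunit

theorem exists_lift_to_pcomp_adjoint_self [CompleteSpace H₂] (hdense : Dense (T.domain : Set H₁))
    (hran : IsClosed (pran T)) (u : (pcomp T T†).domain) (hu : (u : H₂) ∈ pran (pcomp T T†)) :
    ∃ v : (pcomp T† T).domain, (v : H₁) ∈ pran (pcomp T† T) ∧
      T ⟨v, pcomp_domain_le v.2⟩ = u ∧ pcomp T† T v = T† ⟨u, pcomp_domain_le u.2⟩ := by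
  obtain ⟨b, hb⟩ := hu
  obtain ⟨hb₁, hb₂⟩ := mem_pcomp_domain.mp b.2
  have hTv : T ⟨T† ⟨b, hb₁⟩, hb₂⟩ = u := (pcomp_apply b hb₁ hb₂).symm.trans hb
  have hTv_mem : T ⟨T† ⟨b, hb₁⟩, hb₂⟩ ∈ T†.domain := hTv ▸ pcomp_domain_le u.2
  refine ⟨⟨_, mem_pcomp_domain.mpr ⟨hb₂, hTv_mem⟩⟩,
    pran_adjoint_subset_pran_pcomp hdense hran ⟨_, rfl⟩, hTv, ?_⟩
  rw [pcomp_apply _ hb₂ hTv_mem]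
  exact congrArg T† (Subtype.ext hTv)

end Hilbert

theorem stmt2_general {H₁ H₂ : Type*}
    [NormedAddCommGroup H₁] [InnerProductSpace ℂ H₁] [CompleteSpace H₁]
    [NormedAddCommGroup H₂] [InnerProductSpace ℂ H₂] [CompleteSpace H₂]
    (T : H₁ →ₗ.[ℂ] H₂) (hdense : Dense (T.domain : Set H₁)) (hclosed : T.IsClosed)
    (hran : IsClosed (pran T))
    (hcpt : CompactGraphInclusionOn (pcomp T.adjoint T)) :
    CompactGraphInclusionOn (pcomp T T.adjoint) := by
  obtain ⟨C, hC⟩ := exists_norm_le_mul_norm_pcomp_adjoint_self hdense hclosed hcpt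
  set R := max C 1
  have hsub : ((↑) : (pcomp T T†).domain → H₂) ''
      {u | (u : H₂) ∈ pran (pcomp T T†) ∧ ‖(u : H₂)‖ ^ 2 + ‖pcomp T T† u‖ ^ 2 ≤ 1} ⊆
      (fun v : (pcomp T† T).domain => T ⟨v, pcomp_domain_le v.2⟩) '' rangeGraphBox _ R := by
    rintro _ ⟨u, ⟨hu, hnorm⟩, rfl⟩
    obtain ⟨v, hv, hTv, hS₁v⟩ := exists_lift_to_pcomp_adjoint_self hdense hran u hu
    have hadj := (adjoint_isFormalAdjoint hdense).symm.norm_sq_le u (pcomp_domain_le u.2)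
    have hS₁v_le : ‖pcomp T† T v‖ ≤ 1 := by
      -- `‖T† u‖² ≤ ‖u‖ ‖T T† u‖ ≤ (‖u‖² + ‖T T† u‖²) / 2`
      rw [hS₁v]
      nlinarith [norm_nonneg (T† ⟨u, pcomp_domain_le u.2⟩), sq_nonneg (‖(u : H₂)‖ - ‖pcomp T T† u‖)]
    refine ⟨v, ⟨hv, ?_, hS₁v_le.trans (le_max_right _ _)⟩, hTv⟩
    calc ‖(v : H₁)‖ ≤ C * ‖pcomp T† T v‖ := hC v hv
      _ ≤ R := by nlinarith [le_max_left C 1, le_max_right C 1, norm_nonneg (pcomp T† T v)]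
  have hbox : TotallyBounded (rangeGraphBox (pcomp T† T) R) :=
    (totallyBounded_image_iff isUniformEmbedding_subtype_val.isUniformInducing).mp
      ((hcpt.isCompact_closure_rangeGraphBox R).totallyBounded.subset subset_closure)
  have himage := hbox.image_of_uniformContinuousOn
    (((adjoint_isFormalAdjoint hdense).uniformContinuousOn R).mono fun _ hv => hv.2.2)
  exact (himage.subset hsub).closure.isCompact_of_isClosed isClosed_closure

/-- Let `T : H₁ → H₂` be a densely defined closed operator between separable
Hilbert spaces with closed range.  If the inclusion `dom (T†∘T) ∩ im (T†∘T) ↪ H₁` (graph norm)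
is compact, then so is the inclusion `dom (T∘T†) ∩ im (T∘T†) ↪ H₂` (graph norm). -/
theorem stmt2 {H₁ H₂ : Type*}
    [NormedAddCommGroup H₁] [InnerProductSpace ℂ H₁] [CompleteSpace H₁]
    [TopologicalSpace.SeparableSpace H₁]
    [NormedAddCommGroup H₂] [InnerProductSpace ℂ H₂] [CompleteSpace H₂]
    [TopologicalSpace.SeparableSpace H₂]
    (T : H₁ →ₗ.[ℂ] H₂) (hdense : Dense (T.domain : Set H₁)) (hclosed : T.IsClosed)
    (hran : IsClosed (pran T))
    (hcpt : CompactGraphInclusionOn (pcomp T.adjoint T)) :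
    CompactGraphInclusionOn (pcomp T T.adjoint) :=
  stmt2_general T hdense hclosed hran hcpt

end Paper
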